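/- Let Γ_p ⊂ U_p × Δ^{n+1} be the closed subvariety defined by the equations z_{n+1}(λ + p(t)) = λ, z_0 − t_1 z_1 = 0, and ε_j(z) − t_{j+1} z_{j+1} = 0 for j = 1,...,n−1. Then Γ_p is disjoint from U_p × Y_p, where Y_p ⊂ Δ^{n+1} is the divisor (z_0···z_{n+1})(ε_0(z)···ε_n(z))R_p(z) = 0; i.e., if ((t,λ), z) satisfies the defining equations of Γ_p with (t,λ) ∈ U_p and z ∈ Δ^{n+1}, then z_j ≠ 0 for all j, ε_j(z) ≠ 0 for all j, and R_p(z) ≠ 0. -/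
import Mathlib

open MvPolynomial

/-- The correspondence `Γ_p` is disjoint from `U_p × Y_p`: if
`(t,λ) ∈ U_p` and `z ∈ Δ^{n+1}` satisfy the defining equations
`z_{n+1}(λ + p(t)) = λ` and `ε_j(z) = t_{j+1} z_{j+1}` (for `j = 0,...,n−1`), then all
`z_i ≠ 0`, all `ε_k(z) ≠ 0`, and `p(t(z)) ≠ 0` (equivalently `R_p(z) ≠ 0`). -/
theorem stmt_12 (n : ℕ) (p : MvPolynomial (Fin n) ℂ)
    (t : Fin n → ℂ) (lam : ℂ) (z : Fin (n+2) → ℂ)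
    (ht : ∀ i, t i ≠ 0) (hp : eval t p ≠ 0) (hlam : lam ≠ 0)
    (hsum : ∑ i, z i = 1)
    (heq0 : z ⟨n+1, by omega⟩ * (lam + eval t p) = lam)
    (heqs : ∀ j : Fin n,
      (∑ i : Fin (n+2), if (i : ℕ) ≤ (j : ℕ) then z i else 0) =
        t j * z ⟨(j : ℕ) + 1, by have := j.isLt; omega⟩) :
    (∀ i, z i ≠ 0) ∧
    (∀ k : Fin (n+2),
      (∑ i : Fin (n+2), if (i : ℕ) ≤ (k : ℕ) then z i else 0) ≠ 0) ∧
    eval (fun k : Fin n =>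
      (∑ i : Fin (n+2), if (i : ℕ) ≤ (k : ℕ) then z i else 0) /
        z ⟨(k : ℕ) + 1, by have := k.isLt; omega⟩) p ≠ 0 := by
  set E : ℕ → ℂ := fun m => ∑ i : Fin (n+2), if (i : ℕ) ≤ m then z i else 0 with hE
  have hlp : lam + eval t p ≠ 0 := by
    intro h
    rw [h, mul_zero] at heq0
    exact hlam heq0.symm
  have hzlast : z ⟨n+1, by omega⟩ ≠ 0 := by
    intro h
    rw [h, zero_mul] at heq0
    exact hlam heq0.symm
  have hstep : ∀ (m : ℕ) (hm : m + 1 < n + 2),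
      E (m+1) = E m + z ⟨m+1, hm⟩ := by
    intro m hm
    have hpt : ∀ i : Fin (n+2), (if (i:ℕ) ≤ m+1 then z i else 0)
        = (if (i:ℕ) ≤ m then z i else 0) + (if i = ⟨m+1, hm⟩ then z i else 0) := by
      intro i
      rcases eq_or_ne i ⟨m+1, hm⟩ with h | h
      · subst h
        simp
      · have hne : (i:ℕ) ≠ m+1 := fun hc => h (Fin.ext hc)
        rw [if_neg h]
        split_ifs with h1 h2 <;> first | (exfalso; omega) | ring
    simp only [hE, hpt, Finset.sum_add_distrib, Finset.sum_ite_eq']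
    simp
  have hE_top : E (n+1) = 1 := by
    have hpt : ∀ i : Fin (n+2), (if (i:ℕ) ≤ n+1 then z i else 0) = z i := by
      intro i
      exact if_pos (by have := i.isLt; omega)
    simp only [hE, hpt]
    exact hsum
  have hEn' : E n = 1 - z ⟨n+1, by omega⟩ := by
    have h1 := hstep n (by omega)
    rw [hE_top] at h1
    linear_combination -h1
  have hEnne : E n ≠ 0 := by
    intro h
    have : E n * (lam + eval t p) = eval t p := by
      linear_combination (lam + eval t p) * hEn' - heq0
    rw [h, zero_mul] at this
    exact hp this.symm
  -- the relation E j = t j * z_{j+1} for j < n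
  have hrel : ∀ j : ℕ, (hj : j < n) → E j = t ⟨j, hj⟩ * z ⟨j+1, by omega⟩ := by
    intro j hj
    exact heqs ⟨j, hj⟩
  -- descending induction
  have key : ∀ m : ℕ, m ≤ n → E (n - m) ≠ 0 ∧ z ⟨n - m + 1, by omega⟩ ≠ 0 := by
    intro m
    induction m with
    | zero =>
      intro _
      simpa using ⟨hEnne, hzlast⟩
    | succ m ih =>
      intro hm
      obtain ⟨ihE, _⟩ := ih (by omega)
      set j := n - (m+1) with hj
      have hjn : j < n := by omega
      have hnm : n - m = j + 1 := by omega
      rw [hnm] at ihE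
      have hs := hstep j (by omega)
      have hr := hrel j hjn
      have hz1 : z ⟨j+1, by omega⟩ ≠ 0 := by
        intro h0
        rw [hs, hr, h0] at ihE
        simp at ihE
      refine ⟨?_, hz1⟩
      rw [hr]
      exact mul_ne_zero (ht _) hz1
  -- z_i ≠ 0 for all i
  have hz : ∀ i : Fin (n+2), z i ≠ 0 := by
    intro i
    rcases Nat.eq_zero_or_pos (i : ℕ) with h0 | hpos
    · -- z 0 = E 0
      have hE0 : E 0 = z i := by
        simp only [hE]
        rw [Finset.sum_eq_single i]
        · exact if_pos (by omega)
        · intro b _ hb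
          rw [if_neg]
          intro hb0
          exact hb (Fin.ext (by omega))
        · simp
      intro h
      rw [h] at hE0
      exact (key n le_rfl).1 (by simpa using hE0)
    · have hk : (i : ℕ) ≤ n + 1 := by have := i.isLt; omega
      have hm : n + 1 - (i : ℕ) ≤ n := by omega
      have := (key (n + 1 - (i : ℕ)) hm).2
      have hidx : (⟨n - (n + 1 - (i:ℕ)) + 1, by omega⟩ : Fin (n+2)) = i :=
        Fin.ext (by simp; omega)
      rwa [hidx] at this
  -- ε_k ≠ 0
  have hEk : ∀ k : Fin (n+2), E (k : ℕ) ≠ 0 := by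
    intro k
    rcases Nat.lt_or_ge (k : ℕ) (n+1) with hk | hk
    · have := (key (n - (k : ℕ)) (by omega)).1
      have hidx : n - (n - (k:ℕ)) = (k:ℕ) := by omega
      rwa [hidx] at this
    · have hk1 : (k : ℕ) = n + 1 := by have := k.isLt; omega
      rw [hk1, hE_top]
      exact one_ne_zero
  refine ⟨hz, hEk, ?_⟩
  have hfun : (fun k : Fin n =>
      (∑ i : Fin (n+2), if (i : ℕ) ≤ (k : ℕ) then z i else 0) /
        z ⟨(k : ℕ) + 1, by have := k.isLt; omega⟩) = t := by
    funext k
    have hr := hrel (k : ℕ) k.isLt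
    have : E (k : ℕ) / z ⟨(k:ℕ)+1, by have := k.isLt; omega⟩ = t k := by
      rw [hr]
      rw [mul_div_assoc, div_self (hz _), mul_one]
    exact this
  rw [hfun]
  exact hp
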